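/- arXiv:1910.08394 — 3 statements merged into one kernel-verified Lean document; each statement's English description precedes it below -/
import Mathlib

section
/- For every positive integer n and all y > 0, x > 1, the incomplete Bessel integral satisfies the bound |K_{in}(y, π)| ≤ (y/n²)·( sinh(π)·e^{−y} + ∫₀^π e^{−y cosh u}(cosh u + y sinh² u) du ). -/
open Real intervalIntegral

/-- The incomplete Bessel integral `K_{in}(y, ω) = ∫₀^ω e^{−y cosh u} cos(nu) du`. -/
noncomputable def besselKimInc (n : ℕ) (y ω : ℝ) : ℝ :=
  ∫ u in (0:ℝ)..ω, Real.exp (-y * Real.cosh u) * Real.cos (n * u)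

/-!
Integrating by parts twice, differentiating `e^{-y cosh u}` and integrating `cos (n u)`, writes
`K_{in}(y, π)` as a boundary term at `π` (the one at `0` vanishes since `sin 0 = sinh 0 = 0`) plus
`(y / n²) ∫₀^π e^{-y cosh u} (cosh u - y sinh² u) cos (n u) du`. Bounding `|cos| ≤ 1`,
`|cosh u - y sinh² u| ≤ cosh u + y sinh² u` and `e^{-y cosh π} ≤ e^{-y}` gives the estimate.
-/

theorem hasDerivAt_exp_neg_mul_cosh (y u : ℝ) :
    HasDerivAt (fun u => exp (-y * cosh u)) (-y * sinh u * exp (-y * cosh u)) u :=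
  ((hasDerivAt_cosh u).const_mul (-y)).exp.congr_deriv (by ring)

theorem hasDerivAt_exp_neg_mul_cosh_mul_cos_antideriv {ν : ℝ} (hν : ν ≠ 0) (y u : ℝ) :
    HasDerivAt
      (fun u => exp (-y * cosh u) * (sin (ν * u) / ν - y * sinh u * cos (ν * u) / ν ^ 2))
      (exp (-y * cosh u) * cos (ν * u)
        - y / ν ^ 2 * (exp (-y * cosh u) * (cosh u - y * sinh u ^ 2) * cos (ν * u))) u := by
  have hlin : HasDerivAt (fun u => ν * u) ν u := by
    simpa using (hasDerivAt_id u).const_mul ν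
  have hbracket := (hlin.sin.div_const ν).sub
    ((((hasDerivAt_sinh u).const_mul y).mul hlin.cos).div_const (ν ^ 2))
  refine ((hasDerivAt_exp_neg_mul_cosh y u).mul hbracket).congr_deriv ?_
  simp only [Pi.sub_apply, Pi.mul_apply]
  field_simp
  ring

theorem besselKimInc_eq_boundary_add_integral {n : ℕ} (hn : n ≠ 0) (y ω : ℝ) :
    besselKimInc n y ω =
      exp (-y * cosh ω) * (sin (n * ω) / n - y * sinh ω * cos (n * ω) / n ^ 2)
        + y / n ^ 2 * ∫ u in (0:ℝ)..ω, exp (-y * cosh u) * (cosh u - y * sinh u ^ 2) * cos (n * u) := by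
  have hcont : Continuous fun u => exp (-y * cosh u) * (cosh u - y * sinh u ^ 2) * cos (n * u) := by
    fun_prop
  have hFTC := integral_eq_sub_of_hasDerivAt
    (fun u _ => hasDerivAt_exp_neg_mul_cosh_mul_cos_antideriv (Nat.cast_ne_zero.mpr hn) y u)
    (((by fun_prop : Continuous fun u => exp (-y * cosh u) * cos (n * u)).sub
      (hcont.const_mul _)).intervalIntegrable 0 ω)
  rw [integral_sub (Continuous.intervalIntegrable (by fun_prop) _ _)
      ((hcont.const_mul _).intervalIntegrable _ _),
    integral_const_mul] at hFTC
  simp only [mul_zero, zero_mul, sin_zero, sinh_zero, zero_div, sub_zero] at hFTC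
  rw [besselKimInc]
  linarith

theorem besselKimInc_pi_eq {n : ℕ} (hn : n ≠ 0) (y : ℝ) :
    besselKimInc n y π =
      (-1) ^ (n + 1) / n ^ 2 * sinh π * y * exp (-y * cosh π)
        + y / n ^ 2 * ∫ u in (0:ℝ)..π, exp (-y * cosh u) * (cosh u - y * sinh u ^ 2) * cos (n * u) := by
  rw [besselKimInc_eq_boundary_add_integral hn, sin_nat_mul_pi, cos_nat_mul_pi]
  ring

theorem abs_integral_exp_neg_mul_cosh_mul_cos_le {y ω : ℝ} (hy : 0 ≤ y) (hω : 0 ≤ ω) (ν : ℝ) :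
    |∫ u in (0:ℝ)..ω, exp (-y * cosh u) * (cosh u - y * sinh u ^ 2) * cos (ν * u)|
      ≤ ∫ u in (0:ℝ)..ω, exp (-y * cosh u) * (cosh u + y * sinh u ^ 2) := by
  refine (abs_integral_le_integral_abs hω).trans
    (integral_mono_on hω (Continuous.intervalIntegrable (by fun_prop) _ _)
      (Continuous.intervalIntegrable (by fun_prop) _ _) fun u _ => ?_)
  have hdiff : |cosh u - y * sinh u ^ 2| ≤ cosh u + y * sinh u ^ 2 := by
    refine (abs_sub _ _).trans_eq ?_
    rw [abs_of_pos (cosh_pos u), abs_of_nonneg (by positivity)]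
  rw [abs_mul, abs_mul, abs_of_pos (exp_pos _)]
  calc exp (-y * cosh u) * |cosh u - y * sinh u ^ 2| * |cos (ν * u)|
      ≤ exp (-y * cosh u) * (cosh u + y * sinh u ^ 2) * 1 := by
        gcongr
        exact abs_cos_le_one _
    _ = exp (-y * cosh u) * (cosh u + y * sinh u ^ 2) := mul_one _

theorem besselKimInc_bound_general (n : ℕ) (hn : 0 < n) (y : ℝ) (hy : 0 < y) :
    |besselKimInc n y Real.pi| ≤
      (y / n ^ 2) * (Real.sinh Real.pi * Real.exp (-y)
        + ∫ u in (0:ℝ)..Real.pi,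
            Real.exp (-y * Real.cosh u) * (Real.cosh u + y * Real.sinh u ^ 2)) := by
  have hboundary : |(-1) ^ (n + 1) / (n:ℝ) ^ 2 * sinh π * y * exp (-y * cosh π)|
      ≤ y / n ^ 2 * (sinh π * exp (-y)) := by
    rw [abs_mul, abs_mul, abs_mul, abs_div, abs_neg_one_pow, abs_of_pos (sinh_pos_iff.mpr pi_pos),
      abs_of_pos hy, abs_of_pos (exp_pos _), abs_of_pos (by positivity : (0:ℝ) < n ^ 2)]
    calc 1 / (n:ℝ) ^ 2 * sinh π * y * exp (-y * cosh π)
        ≤ 1 / (n:ℝ) ^ 2 * sinh π * y * exp (-y) := by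
          gcongr
          nlinarith [one_le_cosh π]
      _ = y / n ^ 2 * (sinh π * exp (-y)) := by ring
  have hintegral := abs_integral_exp_neg_mul_cosh_mul_cos_le hy.le pi_pos.le n
  rw [besselKimInc_pi_eq hn.ne']
  calc _ ≤ _ := abs_add_le _ _
    _ ≤ y / n ^ 2 * (sinh π * exp (-y))
          + y / n ^ 2 * ∫ u in (0:ℝ)..π, exp (-y * cosh u) * (cosh u + y * sinh u ^ 2) := by
        rw [abs_mul (y / (n:ℝ) ^ 2), abs_of_nonneg (by positivity : 0 ≤ y / (n:ℝ) ^ 2)]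
        exact add_le_add hboundary (mul_le_mul_of_nonneg_left hintegral (by positivity))
    _ = _ := by ring

theorem besselKimInc_bound (n : ℕ) (hn : 0 < n) (y : ℝ) (hy : 0 < y) (x : ℝ) (hx : 1 < x) :
    |besselKimInc n y Real.pi| ≤
      (y / n ^ 2) * (Real.sinh Real.pi * Real.exp (-y)
        + ∫ u in (0:ℝ)..Real.pi,
            Real.exp (-y * Real.cosh u) * (Real.cosh u + y * Real.sinh u ^ 2)) :=
  besselKimInc_bound_general n hn y hy
end

section
/- Let μ ∈ ℂ with Re μ < 1/2 and n be a positive integer. Then for all x > 1, ∫₁^∞ (x²−1)^{−μ/2} e^{−yx} P^μ_{in−1/2}(x) dx = √(2/π) · y^{μ−1/2} · K_{in}(y) for every y > 0, where K_{in} is the modified Bessel function of purely imaginary index. -/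
open Real Complex MeasureTheory
/-- The associated Legendre function of the first kind `P^μ_ν(x)`, `x > 1`, `Re μ < 1/2`,
via the Mehler integral representation (with `x = cosh α`, `α = log (x + √(x²−1))`). -/
noncomputable def legendreP (μ ν : ℂ) (x : ℝ) : ℂ :=
  (Real.sqrt (2 / Real.pi) : ℂ) * ((Real.sqrt (x ^ 2 - 1) : ℝ) : ℂ) ^ μ /
      Complex.Gamma (1 / 2 - μ) *
    ∫ t in (0:ℝ)..Real.log (x + Real.sqrt (x ^ 2 - 1)),
      Complex.cosh ((t : ℂ) * (ν + 1 / 2)) / ((x - Real.cosh t : ℝ) : ℂ) ^ ((1:ℂ) / 2 + μ)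

/-- The incomplete Legendre integral `P^μ_ν(z, ω)`, `z > 1`, `ω > 0`. -/
noncomputable def legendrePInc (μ ν : ℂ) (z ω : ℝ) : ℂ :=
  (Real.sqrt (2 / Real.pi) : ℂ) * Complex.Gamma (1 / 2 - μ) * ((z ^ 2 - 1 : ℝ) : ℂ) ^ (-μ / 2) /
      (Complex.Gamma (1 + ν - μ) * Complex.Gamma (-ν - μ)) *
    ∫ t in (0:ℝ)..ω,
      Complex.cosh ((t : ℂ) * (ν + 1 / 2)) / ((Real.cosh t + z : ℝ) : ℂ) ^ ((1:ℂ) / 2 - μ)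

/-- The modified Bessel function of the second kind of purely imaginary order `i n`. -/
noncomputable def besselKim (n : ℕ) (y : ℝ) : ℝ :=
  ∫ t in Set.Ioi (0:ℝ), Real.exp (-y * Real.cosh t) * Real.cos (n * t)

/-!
Substituting Mehler's integral, the factor `(x² - 1)^(-μ/2)` cancels the `(x² - 1)^(μ/2)` in it,
and the left side becomes `√(2/π) / Γ(1/2 - μ)` times a double integral of
`cos (n t) e^{-yx} (x - cosh t)^(-μ-1/2)` over the region `0 < t, cosh t < x`. This integrand
is absolutely integrable, so by Fubini one may integrate in `x` first: the inner integral is a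
shifted Gamma integral, equal to `e^{-y cosh t} y^(μ-1/2) Γ(1/2 - μ)`, and the remaining
`t`-integral is the one defining `K_{in}(y)`.
-/

open Set

lemma setIntegral_Ioi_comp_sub {E : Type*} [NormedAddCommGroup E] [NormedSpace ℝ E]
    (f : ℝ → E) (c : ℝ) : ∫ x in Ioi c, f (x - c) = ∫ x in Ioi 0, f x := by
  rw [← (measurePreserving_add_right volume c).setIntegral_preimage_emb
    (measurableEmbedding_addRight c), preimage_add_const_Ioi]
  simp

lemma integral_Ioi_cexp_neg_mul_mul_sub_cpow {y : ℝ} (hy : 0 < y) {s : ℂ} (hs : 0 < s.re)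
    (c : ℝ) :
    ∫ x in Ioi c, cexp (-y * x) * ((x - c : ℝ) : ℂ) ^ (s - 1)
      = cexp (-y * c) * ((1 / y) ^ s * Complex.Gamma s) := by
  rw [← integral_cpow_mul_exp_neg_mul_Ioi hs hy, ← integral_const_mul,
    ← setIntegral_Ioi_comp_sub _ c]
  refine setIntegral_congr_fun measurableSet_Ioi fun x _ => ?_
  rw [mul_left_comm, ← Complex.exp_add]
  push_cast
  ring_nf

lemma integrableOn_Ioi_cexp_neg_mul_mul_sub_cpow {y : ℝ} (hy : 0 < y) {s : ℂ} (hs : 0 < s.re)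
    (c : ℝ) :
    IntegrableOn (fun x : ℝ => cexp (-y * x) * ((x - c : ℝ) : ℂ) ^ (s - 1)) (Ioi c) := by
  refine Integrable.of_integral_ne_zero ?_
  rw [integral_Ioi_cexp_neg_mul_mul_sub_cpow hy hs]
  simp [Complex.Gamma_ne_zero_of_re_pos hs, hy.ne']

lemma norm_cexp_neg_mul_mul_sub_cpow {c x : ℝ} (hcx : c < x) (y : ℝ) (s : ℂ) :
    ‖cexp (-y * x) * ((x - c : ℝ) : ℂ) ^ (s - 1)‖
      = rexp (-y * x) * (x - c) ^ (s.re - 1) := by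
  rw [norm_mul, Complex.norm_exp, Complex.norm_cpow_eq_rpow_re_of_pos (sub_pos.mpr hcx)]
  norm_cast

lemma integral_Ioi_exp_neg_mul_mul_sub_rpow {y : ℝ} (hy : 0 < y) {σ : ℝ} (hσ : 0 < σ)
    (c : ℝ) :
    ∫ x in Ioi c, rexp (-y * x) * (x - c) ^ (σ - 1)
      = rexp (-y * c) * ((1 / y) ^ σ * Real.Gamma σ) := by
  rw [← integral_rpow_mul_exp_neg_mul_Ioi hσ hy, ← integral_const_mul,
    ← setIntegral_Ioi_comp_sub _ c]
  refine setIntegral_congr_fun measurableSet_Ioi fun x _ => ?_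
  rw [mul_left_comm, ← Real.exp_add]
  ring_nf

lemma cosh_lt_iff_lt_arcosh {t x : ℝ} (ht : 0 ≤ t) (hx : 1 ≤ x) :
    Real.cosh t < x ↔ t < Real.arcosh x := by
  rw [← Real.cosh_arcosh hx, Real.cosh_lt_cosh, abs_of_nonneg ht,
    abs_of_nonneg (Real.arcosh_nonneg hx), Real.cosh_arcosh hx]

lemma integrableOn_exp_neg_mul_cosh {y : ℝ} (hy : 0 < y) :
    IntegrableOn (fun t => rexp (-y * Real.cosh t)) (Ioi 0) := by
  refine Integrable.mono' ((exp_neg_integrableOn_Ioi 0 (half_pos hy)).const_mul (rexp (-(y / 2))))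
    (by fun_prop) ((ae_restrict_iff' measurableSet_Ioi).mpr (.of_forall fun t _ => ?_))
  have hcosh : (1 + t) / 2 ≤ Real.cosh t := by
    rw [Real.cosh_eq]
    linarith [Real.add_one_le_exp t, Real.exp_pos (-t)]
  rw [Real.norm_of_nonneg (Real.exp_pos _).le, ← Real.exp_add]
  exact Real.exp_le_exp.mpr (by nlinarith)

/-- The integrand of `∫_{x > 1} e^{-yx} ∫_0^{arcosh x} g t (x - cosh t)^(s-1) dt dx` as a
function on the plane. -/
noncomputable def mehlerLaplaceKernel (g : ℝ → ℂ) (s : ℂ) (y : ℝ) (x t : ℝ) : ℂ :=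
  {p : ℝ × ℝ | 0 < p.2 ∧ Real.cosh p.2 < p.1}.indicator
    (fun p => g p.2 * (cexp (-y * p.1) * ((p.1 - Real.cosh p.2 : ℝ) : ℂ) ^ (s - 1))) (x, t)

namespace mehlerLaplaceKernel

variable {g : ℝ → ℂ} {s : ℂ} {y : ℝ}

lemma stronglyMeasurable (hg : Measurable g) :
    StronglyMeasurable (Function.uncurry (mehlerLaplaceKernel g s y)) := by
  have hS : MeasurableSet {p : ℝ × ℝ | 0 < p.2 ∧ Real.cosh p.2 < p.1} :=
    ((isOpen_lt continuous_const continuous_snd).inter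
      (isOpen_lt (by fun_prop) continuous_fst)).measurableSet
  refine (Measurable.stronglyMeasurable ?_).indicator hS
  exact (hg.comp measurable_snd).mul (by fun_prop)

lemma apply_of_pos {t : ℝ} (ht : 0 < t) (x : ℝ) :
    mehlerLaplaceKernel g s y x t = (Ioi (Real.cosh t)).indicator
      (fun x => g t * (cexp (-y * x) * ((x - Real.cosh t : ℝ) : ℂ) ^ (s - 1))) x := by
  by_cases hx : Real.cosh t < x <;> simp [mehlerLaplaceKernel, indicator, ht, hx]

lemma apply_of_nonpos {t : ℝ} (ht : t ≤ 0) (x : ℝ) : mehlerLaplaceKernel g s y x t = 0 := by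
  simp [mehlerLaplaceKernel, ht.not_gt]

lemma apply_of_one_le {x : ℝ} (hx : 1 ≤ x) (t : ℝ) :
    mehlerLaplaceKernel g s y x t = (Ioo 0 (Real.arcosh x)).indicator
      (fun t => g t * (cexp (-y * x) * ((x - Real.cosh t : ℝ) : ℂ) ^ (s - 1))) t := by
  by_cases ht : 0 < t
  · by_cases hxt : Real.cosh t < x
    · simp [mehlerLaplaceKernel, ht, hxt, (cosh_lt_iff_lt_arcosh ht.le hx).mp hxt]
    · simp [mehlerLaplaceKernel, hxt, mt (cosh_lt_iff_lt_arcosh ht.le hx).mpr hxt]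
  · simp [mehlerLaplaceKernel, ht]

lemma apply_of_le_one {x : ℝ} (hx : x ≤ 1) (t : ℝ) : mehlerLaplaceKernel g s y x t = 0 := by
  refine indicator_of_notMem (fun hxt => ?_) _
  linarith [Real.one_le_cosh t, show Real.cosh t < x from hxt.2]

lemma integral_apply_of_pos (hy : 0 < y) (hs : 0 < s.re) {t : ℝ} (ht : 0 < t) :
    ∫ x, mehlerLaplaceKernel g s y x t
      = g t * (cexp (-y * Real.cosh t) * ((1 / y) ^ s * Complex.Gamma s)) := by
  simp only [apply_of_pos ht]
  rw [integral_indicator measurableSet_Ioi, integral_const_mul,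
    integral_Ioi_cexp_neg_mul_mul_sub_cpow hy hs]

lemma integral_norm_apply_of_pos (hy : 0 < y) (hs : 0 < s.re) {t : ℝ} (ht : 0 < t) :
    ∫ x, ‖mehlerLaplaceKernel g s y x t‖
      = ‖g t‖ * (rexp (-y * Real.cosh t) * ((1 / y) ^ s.re * Real.Gamma s.re)) := by
  simp only [apply_of_pos ht, norm_indicator_eq_indicator_norm]
  rw [integral_indicator measurableSet_Ioi,
    setIntegral_congr_fun measurableSet_Ioi fun x hx => by
      rw [norm_mul, norm_cexp_neg_mul_mul_sub_cpow hx],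
    integral_const_mul, integral_Ioi_exp_neg_mul_mul_sub_rpow hy hs]

lemma integrable {C : ℝ} (hg : Measurable g) (hC : ∀ t, ‖g t‖ ≤ C) (hy : 0 < y)
    (hs : 0 < s.re) :
    Integrable (Function.uncurry (mehlerLaplaceKernel g s y)) (volume.prod volume) := by
  rw [integrable_prod_iff' (stronglyMeasurable hg).aestronglyMeasurable]
  refine ⟨.of_forall fun t => ?_, ?_⟩
  · rcases lt_or_ge 0 t with ht | ht
    · simp only [Function.uncurry_apply_pair, apply_of_pos ht]
      exact (integrable_indicator_iff measurableSet_Ioi).mpr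
        ((integrableOn_Ioi_cexp_neg_mul_mul_sub_cpow hy hs _).const_mul _)
    · simp only [Function.uncurry_apply_pair, apply_of_nonpos ht]
      exact integrable_zero _ _ _
  set A := (1 / y) ^ s.re * Real.Gamma s.re
  have hA : 0 ≤ A := mul_nonneg (by positivity) (Real.Gamma_pos_of_pos hs).le
  refine Integrable.mono' ((integrable_indicator_iff measurableSet_Ioi).mpr
    ((integrableOn_exp_neg_mul_cosh hy).mul_const (C * A)))
    (stronglyMeasurable hg).norm.integral_prod_left'.aestronglyMeasurable (.of_forall fun t => ?_)
  rcases lt_or_ge 0 t with ht | ht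
  · simp only [Function.uncurry_apply_pair, integral_norm_apply_of_pos hy hs ht,
      indicator_of_mem (mem_Ioi.mpr ht)]
    rw [Real.norm_of_nonneg (by positivity)]
    calc ‖g t‖ * (rexp (-y * Real.cosh t) * A) ≤ C * (rexp (-y * Real.cosh t) * A) := by
          gcongr; exact hC t
      _ = rexp (-y * Real.cosh t) * (C * A) := by ring
  · simp [apply_of_nonpos ht, indicator_of_notMem (notMem_Ioi.mpr ht)]

end mehlerLaplaceKernel

open mehlerLaplaceKernel in
theorem integral_Ioi_cexp_mul_integral_Ioo_arcosh {g : ℝ → ℂ} {C : ℝ} (hg : Measurable g)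
    (hC : ∀ t, ‖g t‖ ≤ C) {y : ℝ} (hy : 0 < y) {s : ℂ} (hs : 0 < s.re) :
    ∫ x in Ioi (1 : ℝ), cexp (-y * x) *
        ∫ t in Ioo 0 (Real.arcosh x), g t * ((x - Real.cosh t : ℝ) : ℂ) ^ (s - 1)
      = (1 / y) ^ s * Complex.Gamma s * ∫ t in Ioi 0, g t * rexp (-y * Real.cosh t) := by
  have h_inner {x : ℝ} (hx : 1 ≤ x) :
      cexp (-y * x) *
          ∫ t in Ioo 0 (Real.arcosh x), g t * ((x - Real.cosh t : ℝ) : ℂ) ^ (s - 1)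
        = ∫ t, mehlerLaplaceKernel g s y x t := by
    simp only [apply_of_one_le hx]
    rw [integral_indicator measurableSet_Ioo, ← integral_const_mul]
    exact setIntegral_congr_fun measurableSet_Ioo fun t _ => by ring
  calc _ = ∫ x in Ioi 1, ∫ t, mehlerLaplaceKernel g s y x t :=
        setIntegral_congr_fun measurableSet_Ioi fun x hx => h_inner (le_of_lt hx)
    _ = ∫ x, ∫ t, mehlerLaplaceKernel g s y x t :=
        setIntegral_eq_integral_of_forall_compl_eq_zero fun x hx => by
          simp [apply_of_le_one (not_lt.mp hx)]
    _ = ∫ t, ∫ x, mehlerLaplaceKernel g s y x t :=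
        integral_integral_swap (integrable hg hC hy hs)
    _ = ∫ t in Ioi 0, ∫ x, mehlerLaplaceKernel g s y x t :=
        (setIntegral_eq_integral_of_forall_compl_eq_zero fun t ht => by
          simp [apply_of_nonpos (not_lt.mp ht)]).symm
    _ = ∫ t in Ioi 0, (1 / y) ^ s * Complex.Gamma s * (g t * rexp (-y * Real.cosh t)) :=
        setIntegral_congr_fun measurableSet_Ioi fun t ht => by
          rw [integral_apply_of_pos hy hs ht]
          push_cast
          ring
    _ = _ := integral_const_mul _ _

lemma ofReal_cpow_neg_div_two_mul_sqrt_cpow {a : ℝ} (ha : 0 < a) (μ : ℂ) :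
    (a : ℂ) ^ (-μ / 2) * ((√a : ℝ) : ℂ) ^ μ = 1 := by
  rw [Complex.cpow_def_of_ne_zero (by exact_mod_cast ha.ne'),
    Complex.cpow_def_of_ne_zero (by exact_mod_cast (Real.sqrt_pos.mpr ha).ne'), ← Complex.exp_add,
    ← Complex.ofReal_log ha.le, ← Complex.ofReal_log (Real.sqrt_nonneg a), Real.log_sqrt ha.le]
  push_cast
  ring_nf
  exact Complex.exp_zero

lemma legendreP_I_mul_sub_half (μ : ℂ) (τ : ℝ) {x : ℝ} (hx : 1 ≤ x) :
    legendreP μ (I * τ - 1 / 2) x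
      = √(2 / π) * ((√(x ^ 2 - 1) : ℝ) : ℂ) ^ μ / Complex.Gamma (1 / 2 - μ) *
        ∫ t in Ioo 0 (Real.arcosh x),
          (Real.cos (τ * t) : ℂ) * ((x - Real.cosh t : ℝ) : ℂ) ^ ((1 / 2 - μ) - 1) := by
  rw [legendreP, ← Real.arcosh, intervalIntegral.integral_of_le (Real.arcosh_nonneg hx),
    integral_Ioc_eq_integral_Ioo]
  congr 1
  refine setIntegral_congr_fun measurableSet_Ioo fun t _ => ?_
  rw [show (t : ℂ) * (I * τ - 1 / 2 + 1 / 2) = (τ * t : ℝ) * I by push_cast; ring,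
    Complex.cosh_mul_I, ← Complex.ofReal_cos, div_eq_mul_inv, ← Complex.cpow_neg]
  ring_nf

theorem integral_Ioi_cpow_mul_cexp_mul_legendreP_I_mul_sub_half {μ : ℂ} (hμ : μ.re < 1 / 2)
    (τ : ℝ) {y : ℝ} (hy : 0 < y) :
    ∫ x in Ioi (1 : ℝ), ((x ^ 2 - 1 : ℝ) : ℂ) ^ (-μ / 2) * cexp (-y * x) *
        legendreP μ (I * τ - 1 / 2) x
      = √(2 / π) * (y : ℂ) ^ (μ - 1 / 2) *
        ((∫ t in Ioi 0, rexp (-y * Real.cosh t) * Real.cos (τ * t) : ℝ) : ℂ) := by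
  have hs : 0 < (1 / 2 - μ).re := by simpa using hμ
  have hΓ : Complex.Gamma (1 / 2 - μ) ≠ 0 := Complex.Gamma_ne_zero_of_re_pos hs
  have h_one_div_y : (1 / y : ℂ) ^ (1 / 2 - μ) = (y : ℂ) ^ (μ - 1 / 2) := by
    rw [one_div, Complex.inv_cpow _ _ (by simp [Complex.arg_ofReal_of_nonneg hy.le,
      pi_ne_zero.symm]), ← Complex.cpow_neg, neg_sub]
  calc _ = ∫ x in Ioi (1 : ℝ), √(2 / π) / Complex.Gamma (1 / 2 - μ) * (cexp (-y * x) *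
        ∫ t in Ioo 0 (Real.arcosh x),
          (Real.cos (τ * t) : ℂ) * ((x - Real.cosh t : ℝ) : ℂ) ^ ((1 / 2 - μ) - 1)) := by
        refine setIntegral_congr_fun measurableSet_Ioi fun x hx => ?_
        have hx2 : 0 < x ^ 2 - 1 := by nlinarith [mem_Ioi.mp hx]
        rw [legendreP_I_mul_sub_half μ τ (le_of_lt hx), ← one_mul (_ / _ * (_ * _)),
          ← ofReal_cpow_neg_div_two_mul_sqrt_cpow hx2 μ]
        ring
    _ = √(2 / π) / Complex.Gamma (1 / 2 - μ) *
        ((1 / y) ^ (1 / 2 - μ) * Complex.Gamma (1 / 2 - μ) *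
          ∫ t in Ioi 0, (Real.cos (τ * t) : ℂ) * rexp (-y * Real.cosh t)) := by
        rw [integral_const_mul, integral_Ioi_cexp_mul_integral_Ioo_arcosh (C := 1) (by fun_prop)
          (fun t => by rw [Complex.norm_real, Real.norm_eq_abs]; exact Real.abs_cos_le_one _) hy hs]
    _ = _ := by
        rw [h_one_div_y, ← integral_complex_ofReal]
        simp only [Complex.ofReal_mul, mul_comm (Real.cos _ : ℂ)]
        generalize Complex.Gamma (1 / 2 - μ) = G at hΓ ⊢
        field_simp

theorem laplace_legendreP_general (μ : ℂ) (hμ : μ.re < 1 / 2) (n : ℕ)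
    (y : ℝ) (hy : 0 < y) :
    ∫ x in Set.Ioi (1:ℝ),
        ((x ^ 2 - 1 : ℝ) : ℂ) ^ (-μ / 2) * Complex.exp (-(y : ℂ) * x) *
          legendreP μ (Complex.I * n - 1 / 2) x =
      (Real.sqrt (2 / Real.pi) : ℂ) * (y : ℂ) ^ (μ - 1 / 2) * (besselKim n y : ℂ) := by
  have h := integral_Ioi_cpow_mul_cexp_mul_legendreP_I_mul_sub_half hμ n hy
  rw [Complex.ofReal_natCast] at h
  exact h

theorem laplace_legendreP (μ : ℂ) (hμ : μ.re < 1 / 2) (n : ℕ) (hn : 0 < n)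
    (y : ℝ) (hy : 0 < y) :
    ∫ x in Set.Ioi (1:ℝ),
        ((x ^ 2 - 1 : ℝ) : ℂ) ^ (-μ / 2) * Complex.exp (-(y : ℂ) * x) *
          legendreP μ (Complex.I * n - 1 / 2) x =
      (Real.sqrt (2 / Real.pi) : ℂ) * (y : ℂ) ^ (μ - 1 / 2) * (besselKim n y : ℂ) :=
  laplace_legendreP_general μ hμ n y hy
end

section
/- For all y > 0 and all integers n ≥ 1, |K_{in}(y, π)| ≤ (y/n²)·( sinh(π)·e^{−y·cosh(π)} + ∫₀^π e^{−y cosh u}·(cosh u + y·sinh²u) du ). -/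
open Real intervalIntegral

theorem besselKimInc_bound' (y : ℝ) (hy : 0 < y) (n : ℕ) (hn : 1 ≤ n) :
    |besselKimInc n y Real.pi| ≤
      (y / n ^ 2) * (Real.sinh Real.pi * Real.exp (-y * Real.cosh Real.pi)
        + ∫ u in (0:ℝ)..Real.pi,
            Real.exp (-y * Real.cosh u) * (Real.cosh u + y * Real.sinh u ^ 2)) := by
  have hn0 : (0:ℝ) < (n:ℝ) := by exact_mod_cast hn
  have hnne : (n:ℝ) ≠ 0 := ne_of_gt hn0
  set g : ℝ → ℝ := fun u => Real.exp (-y * Real.cosh u) with hg_def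
  set g1 : ℝ → ℝ := fun u => Real.exp (-y * Real.cosh u) * (-y * Real.sinh u) with hg1_def
  set g2 : ℝ → ℝ := fun u =>
    Real.exp (-y * Real.cosh u) * (y ^ 2 * Real.sinh u ^ 2 - y * Real.cosh u) with hg2_def
  have hgd : ∀ u : ℝ, HasDerivAt g (g1 u) u := by
    intro u
    have h1 : HasDerivAt (fun u : ℝ => -y * Real.cosh u) (-y * Real.sinh u) u :=
      (Real.hasDerivAt_cosh u).const_mul (-y)
    exact h1.exp
  have hgd1 : ∀ u : ℝ, HasDerivAt g1 (g2 u) u := by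
    intro u
    have h1 : HasDerivAt (fun u : ℝ => -y * Real.sinh u) (-y * Real.cosh u) u :=
      (Real.hasDerivAt_sinh u).const_mul (-y)
    have := (hgd u).mul h1
    convert this using 1
    · rfl
    · rfl
    · funext v
      simp only [hg1_def, hg_def, Pi.mul_apply]
    · simp only [hg1_def, hg2_def]
      ring
  -- continuity facts
  have hcg : Continuous g := by fun_prop
  have hcg1 : Continuous g1 := by fun_prop
  have hcg2 : Continuous g2 := by fun_prop
  have hcsin : Continuous (fun u : ℝ => Real.sin (n * u)) := by fun_prop
  have hccos : Continuous (fun u : ℝ => Real.cos (n * u)) := by fun_prop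
  -- derivative facts for the trig parts
  have hsind : ∀ u : ℝ, HasDerivAt (fun u : ℝ => Real.sin (n * u) / n) (Real.cos (n * u)) u := by
    intro u
    have h1 : HasDerivAt (fun u : ℝ => (n:ℝ) * u) ((n:ℝ)) u := by
      simpa using (hasDerivAt_id u).const_mul (n:ℝ)
    have h2 : HasDerivAt (fun u : ℝ => Real.sin (n * u)) (Real.cos (n * u) * n) u :=
      (Real.hasDerivAt_sin ((n:ℝ) * u)).comp u h1
    have h3 := h2.div_const (n:ℝ)
    convert h3 using 1
    · rfl
    · rfl
    · field_simp
  have hcosd : ∀ u : ℝ, HasDerivAt (fun u : ℝ => -Real.cos (n * u) / n) (Real.sin (n * u)) u := by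
    intro u
    have h1 : HasDerivAt (fun u : ℝ => (n:ℝ) * u) ((n:ℝ)) u := by
      simpa using (hasDerivAt_id u).const_mul (n:ℝ)
    have h2 : HasDerivAt (fun u : ℝ => Real.cos (n * u)) (-Real.sin (n * u) * n) u :=
      (Real.hasDerivAt_cos ((n:ℝ) * u)).comp u h1
    have h3 := (h2.neg).div_const (n:ℝ)
    convert h3 using 1
    · rfl
    · rfl
    · funext v
      simp only [Pi.neg_apply]
    · field_simp
  -- first integration by parts
  have ibp1 : (∫ u in (0:ℝ)..Real.pi, g u * Real.cos (n * u)) =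
      -(∫ u in (0:ℝ)..Real.pi, g1 u * (Real.sin (n * u) / n)) := by
    have := intervalIntegral.integral_mul_deriv_eq_deriv_mul
      (a := (0:ℝ)) (b := Real.pi) (u := g) (u' := g1) (v := fun u : ℝ => Real.sin (n * u) / n)
      (v' := fun u : ℝ => Real.cos (n * u))
      (fun x _ => hgd x) (fun x _ => hsind x)
      (hcg1.intervalIntegrable _ _) (hccos.intervalIntegrable _ _)
    rw [this]
    simp [Real.sin_nat_mul_pi]
  -- second integration by parts
  have ibp2 : (∫ u in (0:ℝ)..Real.pi, g1 u * Real.sin (n * u)) =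
      g1 Real.pi * (-Real.cos (n * Real.pi) / n)
        - (∫ u in (0:ℝ)..Real.pi, g2 u * (-Real.cos (n * u) / n)) := by
    have := intervalIntegral.integral_mul_deriv_eq_deriv_mul
      (a := (0:ℝ)) (b := Real.pi) (u := g1) (u' := g2) (v := fun u : ℝ => -Real.cos (n * u) / n)
      (v' := fun u : ℝ => Real.sin (n * u))
      (fun x _ => hgd1 x) (fun x _ => hcosd x)
      (hcg2.intervalIntegrable _ _) (hcsin.intervalIntegrable _ _)
    rw [this]
    have hg10 : g1 0 = 0 := by simp [hg1_def]
    simp [hg10]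
  -- combine
  have key : besselKimInc n y Real.pi =
      g1 Real.pi * Real.cos (n * Real.pi) / n ^ 2
        - (∫ u in (0:ℝ)..Real.pi, g2 u * Real.cos (n * u)) / n ^ 2 := by
    have h1 : besselKimInc n y Real.pi =
        -((∫ u in (0:ℝ)..Real.pi, g1 u * Real.sin (n * u)) / n) := by
      rw [besselKimInc, ibp1]
      congr 1
      rw [← intervalIntegral.integral_div]
      congr 1 with u
      ring
    rw [h1, ibp2]
    have h2 : (∫ u in (0:ℝ)..Real.pi, g2 u * (-Real.cos (n * u) / n)) =
        -((∫ u in (0:ℝ)..Real.pi, g2 u * Real.cos (n * u)) / n) := by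
      rw [← intervalIntegral.integral_div, ← intervalIntegral.integral_neg]
      congr 1 with u
      ring
    rw [h2]
    field_simp
    ring
  rw [key]
  have hpi : (0:ℝ) ≤ Real.pi := Real.pi_pos.le
  -- bound on the boundary term
  have hb1 : |g1 Real.pi * Real.cos (n * Real.pi)| ≤
      y * (Real.sinh Real.pi * Real.exp (-y * Real.cosh Real.pi)) := by
    rw [abs_mul]
    have h1 : |g1 Real.pi| = Real.exp (-y * Real.cosh Real.pi) * (y * Real.sinh Real.pi) := by
      simp only [hg1_def]
      rw [abs_mul, abs_of_pos (Real.exp_pos _)]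
      congr 1
      rw [abs_of_nonpos]
      · ring
      · have : 0 ≤ Real.sinh Real.pi := (Real.sinh_nonneg_iff.mpr Real.pi_pos.le)
        nlinarith
    calc |g1 Real.pi| * |Real.cos (n * Real.pi)| ≤ |g1 Real.pi| * 1 := by
          exact mul_le_mul_of_nonneg_left (Real.abs_cos_le_one _) (abs_nonneg _)
      _ = y * (Real.sinh Real.pi * Real.exp (-y * Real.cosh Real.pi)) := by rw [h1]; ring
  -- bound on the integral term
  have hb2 : |∫ u in (0:ℝ)..Real.pi, g2 u * Real.cos (n * u)| ≤
      y * ∫ u in (0:ℝ)..Real.pi,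
        Real.exp (-y * Real.cosh u) * (Real.cosh u + y * Real.sinh u ^ 2) := by
    have hle : ∀ u ∈ Set.Icc (0:ℝ) Real.pi, |g2 u * Real.cos (n * u)| ≤
        y * (Real.exp (-y * Real.cosh u) * (Real.cosh u + y * Real.sinh u ^ 2)) := by
      intro u hu
      rw [abs_mul]
      have h1 : |g2 u| ≤ Real.exp (-y * Real.cosh u) * (y * Real.cosh u + y ^ 2 * Real.sinh u ^ 2) := by
        simp only [hg2_def]
        rw [abs_mul, abs_of_pos (Real.exp_pos _)]
        have hc : 0 < Real.cosh u := Real.cosh_pos u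
        have hs : 0 ≤ Real.sinh u ^ 2 := sq_nonneg _
        have := abs_sub_abs_le_abs_sub (y ^ 2 * Real.sinh u ^ 2) (y * Real.cosh u)
        have h2 : |y ^ 2 * Real.sinh u ^ 2 - y * Real.cosh u| ≤
            y * Real.cosh u + y ^ 2 * Real.sinh u ^ 2 := by
          rw [abs_sub_le_iff]
          constructor <;> nlinarith
        exact mul_le_mul_of_nonneg_left h2 (Real.exp_pos _).le
      calc |g2 u| * |Real.cos (n * u)| ≤ |g2 u| * 1 :=
            mul_le_mul_of_nonneg_left (Real.abs_cos_le_one _) (abs_nonneg _)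
        _ = |g2 u| := mul_one _
        _ ≤ Real.exp (-y * Real.cosh u) * (y * Real.cosh u + y ^ 2 * Real.sinh u ^ 2) := h1
        _ = y * (Real.exp (-y * Real.cosh u) * (Real.cosh u + y * Real.sinh u ^ 2)) := by ring
    calc |∫ u in (0:ℝ)..Real.pi, g2 u * Real.cos (n * u)|
        ≤ ∫ u in (0:ℝ)..Real.pi, |g2 u * Real.cos (n * u)| := by
          exact intervalIntegral.abs_integral_le_integral_abs hpi
      _ ≤ ∫ u in (0:ℝ)..Real.pi,
            y * (Real.exp (-y * Real.cosh u) * (Real.cosh u + y * Real.sinh u ^ 2)) := by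
          apply intervalIntegral.integral_mono_on hpi
          · exact ((hcg2.mul hccos).abs).intervalIntegrable _ _
          · have : Continuous (fun u : ℝ =>
                y * (Real.exp (-y * Real.cosh u) * (Real.cosh u + y * Real.sinh u ^ 2))) := by
              fun_prop
            exact this.intervalIntegrable _ _
          · exact hle
      _ = y * ∫ u in (0:ℝ)..Real.pi,
            Real.exp (-y * Real.cosh u) * (Real.cosh u + y * Real.sinh u ^ 2) := by
          rw [← intervalIntegral.integral_const_mul]
  -- finish
  have hn2 : (0:ℝ) < (n:ℝ) ^ 2 := by positivity
  calc |g1 Real.pi * Real.cos (n * Real.pi) / n ^ 2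
        - (∫ u in (0:ℝ)..Real.pi, g2 u * Real.cos (n * u)) / n ^ 2|
      ≤ |g1 Real.pi * Real.cos (n * Real.pi) / n ^ 2|
        + |(∫ u in (0:ℝ)..Real.pi, g2 u * Real.cos (n * u)) / n ^ 2| := abs_sub _ _
    _ = |g1 Real.pi * Real.cos (n * Real.pi)| / n ^ 2
        + |∫ u in (0:ℝ)..Real.pi, g2 u * Real.cos (n * u)| / n ^ 2 := by
        rw [abs_div, abs_div, abs_of_pos hn2]
    _ ≤ (y * (Real.sinh Real.pi * Real.exp (-y * Real.cosh Real.pi))) / n ^ 2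
        + (y * ∫ u in (0:ℝ)..Real.pi,
            Real.exp (-y * Real.cosh u) * (Real.cosh u + y * Real.sinh u ^ 2)) / n ^ 2 := by
        gcongr
    _ = (y / n ^ 2) * (Real.sinh Real.pi * Real.exp (-y * Real.cosh Real.pi)
        + ∫ u in (0:ℝ)..Real.pi,
            Real.exp (-y * Real.cosh u) * (Real.cosh u + y * Real.sinh u ^ 2)) := by
        ring
end
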